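/- arXiv:2405.14549 — 4 statements merged into one kernel-verified Lean document; each statement's English description precedes it below -/
import Mathlib

section
/- The dual code of RM(r, m) equals RM(m-r-1, m), for 0 <= r <= m-1. -/
open scoped BigOperators

/-- The evaluation point `ρ(j) ∈ F₂^m`. -/
def rho (m : ℕ) (j : Fin (2^m)) : Fin m → ZMod 2 :=
  fun i => if Nat.testBit (j : ℕ) (m - 1 - i.val) then 1 else 0

/-- The evaluation vector of a polynomial over all points of `F₂^m`. -/
noncomputable def evalVec (m : ℕ) (f : MvPolynomial (Fin m) (ZMod 2)) :
    Fin (2^m) → ZMod 2 :=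
  fun j => MvPolynomial.eval (rho m j) f

/-- The Reed-Muller code `RM(r, m)` as a subspace of `F₂^{2^m}`. -/
noncomputable def RM (m r : ℕ) : Submodule (ZMod 2) (Fin (2^m) → ZMod 2) :=
  Submodule.span (ZMod 2)
    {v | ∃ f : MvPolynomial (Fin m) (ZMod 2), f.totalDegree ≤ r ∧ evalVec m f = v}

/-- The dual code of a linear code of length `n` over `F₂`, w.r.t. the standard
bilinear form. -/
def dualCode {n : ℕ} (C : Submodule (ZMod 2) (Fin n → ZMod 2)) :
    Submodule (ZMod 2) (Fin n → ZMod 2) where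
  carrier := {v | ∀ c ∈ C, ∑ i, v i * c i = 0}
  add_mem' := by
    intro a b ha hb c hc
    simp only [Set.mem_setOf_eq, Pi.add_apply, add_mul, Finset.sum_add_distrib,
      ha c hc, hb c hc, add_zero]
  zero_mem' := by
    intro c hc
    simp
  smul_mem' := by
    intro t a ha c hc
    simp only [Set.mem_setOf_eq, Pi.smul_apply, smul_eq_mul, mul_assoc,
      ← Finset.mul_sum, ha c hc, mul_zero]

/-!
Under the bijection `rho`, the pairing of the evaluation vectors of `f` and `g` is
`∑_{x ∈ F₂^m} (f g)(x)`, and over `F₂` the sum of a monomial `x^e` over all points is `1` if every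
variable occurs in `e` and `0` otherwise. Hence the pairing vanishes when `deg f + deg g < m`,
giving `RM(m-r-1, m) ⊆ RM(r, m)^⊥`. Conversely, a word of `RM(r, m)^⊥` is the evaluation vector of a
multilinear `g`. If `g` had a monomial `x^d` of maximal degree `≥ m - r`, then pairing `g` with the
complementary monomial `∏_{i ∉ d} x_i`, of degree `≤ r`, would pick out exactly the coefficient of
`x^d`, which is nonzero.
-/

open MvPolynomial Finset

lemma sum_zmod_two_pow (n : ℕ) : ∑ a : ZMod 2, a ^ n = if n ≠ 0 then 1 else 0 := by
  rcases n with _ | n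
  · decide
  · have hpow : ∀ a : ZMod 2, a ^ (n + 1) = a := by
      intro a
      rcases (by decide : ∀ b : ZMod 2, b = 0 ∨ b = 1) a with rfl | rfl <;> simp
    simp only [hpow, ne_eq, Nat.add_one_ne_zero, not_false_eq_true, if_true]
    decide

lemma Finsupp.eq_of_le_of_degree_le {σ : Type*} {d e : σ →₀ ℕ} (hde : d ≤ e)
    (h : e.degree ≤ d.degree) : e = d := by
  have hzero : (e - d).degree = 0 := by
    have := map_add Finsupp.degree d (e - d)
    rw [add_tsub_cancel_of_le hde] at this
    omega
  exact le_antisymm (tsub_eq_zero_iff_le.mp ((Finsupp.degree_eq_zero_iff _).mp hzero)) hde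

section SumOverFTwo

variable {σ : Type*} [Fintype σ] [DecidableEq σ]

lemma sum_eval_monomial (d : σ →₀ ℕ) (c : ZMod 2) :
    ∑ x : σ → ZMod 2, eval x (monomial d c) = if ∀ i, d i ≠ 0 then c else 0 := by
  have h1 : ∀ x : σ → ZMod 2, eval x (monomial d c) = c * ∏ i, x i ^ d i := fun x => by
    rw [eval_monomial, Finsupp.prod_fintype _ _ fun i => pow_zero (x i)]
  rw [Finset.sum_congr rfl fun x _ => h1 x, ← Finset.mul_sum,
    ← Fintype.prod_sum (fun i (a : ZMod 2) => a ^ d i)]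
  simp only [sum_zmod_two_pow, prod_boole, mem_univ, true_implies, mul_ite, mul_one, mul_zero]

lemma sum_eval_mul_monomial (g : MvPolynomial σ (ZMod 2)) (F : σ →₀ ℕ) :
    ∑ x : σ → ZMod 2, eval x (g * monomial F 1)
      = ∑ e ∈ g.support, if ∀ i, e i + F i ≠ 0 then g.coeff e else 0 := by
  conv_lhs => rw [g.as_sum]
  simp only [Finset.sum_mul, monomial_mul, mul_one, map_sum]
  rw [Finset.sum_comm]
  exact Finset.sum_congr rfl fun e _ => by rw [sum_eval_monomial]; rfl

-- For a `0/1`-valued `d`, `equivFunOnFinite.symm 1 - d` is the exponent of `∏ i ∉ d.support, X i`.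
lemma sum_eval_mul_monomial_compl {g : MvPolynomial σ (ZMod 2)}
    (hg : g ∈ restrictDegree σ (ZMod 2) 1) {d : σ →₀ ℕ} (hd : d ∈ g.support)
    (hmax : g.totalDegree ≤ d.degree) :
    ∑ x : σ → ZMod 2, eval x (g * monomial (Finsupp.equivFunOnFinite.symm 1 - d) 1)
      = g.coeff d := by
  rw [mem_restrictDegree] at hg
  rw [sum_eval_mul_monomial, Finset.sum_eq_single_of_mem d hd]
  · refine if_pos fun i => ?_
    simp only [Finsupp.coe_tsub, Pi.sub_apply, Finsupp.coe_equivFunOnFinite_symm, Pi.one_apply]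
    omega
  · intro e he hne
    refine if_neg fun hcover => hne (Finsupp.eq_of_le_of_degree_le (fun i => ?_) ?_)
    · have hcover_i := hcover i
      have hd_i := hg d hd i
      simp only [Finsupp.coe_tsub, Pi.sub_apply, Finsupp.coe_equivFunOnFinite_symm,
        Pi.one_apply] at hcover_i
      omega
    · exact (le_totalDegree he).trans hmax

lemma totalDegree_le_of_sum_eval_mul_monomial_eq_zero {g : MvPolynomial σ (ZMod 2)}
    (hg : g ∈ restrictDegree σ (ZMod 2) 1) {r : ℕ}
    (h : ∀ F : σ →₀ ℕ, F.degree ≤ r → ∑ x : σ → ZMod 2, eval x (g * monomial F 1) = 0) :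
    g.totalDegree ≤ Fintype.card σ - r - 1 := by
  by_contra! hlt
  have hne : g.support.Nonempty := support_nonempty.mpr fun h0 => by simp [h0] at hlt
  obtain ⟨d, hd, hdeg⟩ := Finset.exists_mem_eq_sup g.support hne fun s => s.degree
  have hdeg : g.totalDegree = d.degree := hdeg
  set u : σ →₀ ℕ := Finsupp.equivFunOnFinite.symm 1
  have hdu : d ≤ u := fun i => (mem_restrictDegree _ _ _).mp hg d hd i
  have hu : u.degree = Fintype.card σ := by simp [u, Finsupp.degree_eq_sum]
  have hcompl : (u - d).degree + d.degree = Fintype.card σ := by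
    rw [← map_add, tsub_add_cancel_of_le hdu, hu]
  have hzero := h (u - d) (by omega)
  rw [sum_eval_mul_monomial_compl hg hd hdeg.le] at hzero
  exact mem_support_iff.mp hd hzero

end SumOverFTwo

lemma mem_dualCode_span_iff {n : ℕ} {S : Set (Fin n → ZMod 2)} {v : Fin n → ZMod 2} :
    v ∈ dualCode (Submodule.span (ZMod 2) S) ↔ ∀ s ∈ S, ∑ i, v i * s i = 0 := by
  refine ⟨fun h s hs => h s (Submodule.subset_span hs), fun h c hc => ?_⟩
  induction hc using Submodule.span_induction with
  | mem x hx => exact h x hx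
  | zero => simp
  | add x y _ _ hx hy => simp only [Pi.add_apply, mul_add, Finset.sum_add_distrib, hx, hy, add_zero]
  | smul t x _ hx =>
    simp only [Pi.smul_apply, smul_eq_mul, mul_left_comm, ← Finset.mul_sum, hx, mul_zero]

lemma rho_injective (m : ℕ) : Function.Injective (rho m) := by
  intro j k h
  refine Fin.ext (Nat.eq_of_testBit_eq fun i => ?_)
  by_cases him : i < m
  · have hbit := congrFun h ⟨m - 1 - i, by omega⟩
    simp only [rho, show m - 1 - (m - 1 - i) = i by omega] at hbit
    cases hj : (j : ℕ).testBit i <;> cases hk : (k : ℕ).testBit i <;> simp_all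
  · have hpow : 2 ^ m ≤ 2 ^ i := Nat.pow_le_pow_right two_pos (by omega)
    rw [Nat.testBit_lt_two_pow (j.2.trans_le hpow), Nat.testBit_lt_two_pow (k.2.trans_le hpow)]

lemma rho_bijective (m : ℕ) : Function.Bijective (rho m) := by
  rw [Fintype.bijective_iff_injective_and_card]
  exact ⟨rho_injective m, by simp [ZMod.card]⟩

lemma sum_evalVec_mul_evalVec (m : ℕ) (f g : MvPolynomial (Fin m) (ZMod 2)) :
    ∑ j, evalVec m f j * evalVec m g j = ∑ x : Fin m → ZMod 2, eval x (f * g) :=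
  Fintype.sum_bijective (rho m) (rho_bijective m) _ _ fun _ => (map_mul _ _ _).symm

lemma exists_restrictDegree_evalVec_eq (m : ℕ) (v : Fin (2 ^ m) → ZMod 2) :
    ∃ g ∈ restrictDegree (Fin m) (ZMod 2) 1, evalVec m g = v := by
  let e := Equiv.ofBijective (rho m) (rho_bijective m)
  have hmem : v ∘ e.symm ∈ (restrictDegree (Fin m) (ZMod 2) 1).map (evalₗ (ZMod 2) (Fin m)) := by
    simpa only [ZMod.card] using map_restrict_dom_evalₗ (K := ZMod 2) (σ := Fin m) ▸
      Submodule.mem_top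
  obtain ⟨g, hg, hgv⟩ := Submodule.mem_map.mp hmem
  refine ⟨g, hg, funext fun j => ?_⟩
  simpa [e, evalVec] using congrFun hgv (rho m j)

lemma RM_le_dualCode_RM {m r s : ℕ} (h : r + s < m) : RM m s ≤ dualCode (RM m r) := by
  rw [RM, Submodule.span_le]
  rintro _ ⟨g, hg, rfl⟩
  rw [SetLike.mem_coe, RM, mem_dualCode_span_iff]
  rintro _ ⟨f, hf, rfl⟩
  rw [sum_evalVec_mul_evalVec]
  refine MvPolynomial.sum_eval_eq_zero _ ?_
  have := totalDegree_mul g f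
  simp only [ZMod.card, Fintype.card_fin]
  omega

lemma dualCode_RM_le (m r : ℕ) : dualCode (RM m r) ≤ RM m (m - r - 1) := by
  intro v hv
  obtain ⟨g, hg, rfl⟩ := exists_restrictDegree_evalVec_eq m v
  refine Submodule.subset_span ⟨g, ?_, rfl⟩
  have hdeg := totalDegree_le_of_sum_eval_mul_monomial_eq_zero hg (r := r) fun F hF => by
    rw [← sum_evalVec_mul_evalVec]
    refine hv _ (Submodule.subset_span ⟨monomial F 1, ?_, rfl⟩)
    exact (totalDegree_monomial_le F 1).trans hF
  simpa only [Fintype.card_fin] using hdeg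

/-- The dual code of `RM(r, m)` is `RM(m-r-1, m)`, for `0 ≤ r ≤ m-1`. -/
theorem RM_dual (m r : ℕ) (hm : 1 ≤ m) (hr : r ≤ m - 1) :
    dualCode (RM m r) = RM m (m - r - 1) :=
  le_antisymm (dualCode_RM_le m r) (RM_le_dualCode_RM (by omega))
end

section
/- The generator matrix of RM(r, m) is given by the rows of the m-fold tensor (Kronecker) power of the 2x2 matrix [[1,1],[0,1]] whose Hamming weight is at least 2^{m-r}; equivalently, RM(r, m) is the span of those rows of [[1,1],[0,1]]^{tensor m} of weight >= 2^{m-r}. -/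
open scoped BigOperators

/-- The base matrix `[[1,1],[0,1]]` over `F₂`. -/
def baseMat : Matrix (Fin 2) (Fin 2) (ZMod 2) := !![1, 1; 0, 1]

/-- The `m`-fold Kronecker power of `[[1,1],[0,1]]`, as a `2^m × 2^m` matrix over `F₂`. -/
noncomputable def kronPow : (m : ℕ) → Matrix (Fin (2^m)) (Fin (2^m)) (ZMod 2)
  | 0 => 1
  | m + 1 =>
      Matrix.reindex (finProdFinEquiv.trans (finCongr (by rw [pow_succ]; ring)))
        (finProdFinEquiv.trans (finCongr (by rw [pow_succ]; ring)))
        (Matrix.kroneckerMap (· * ·) baseMat (kronPow m))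

/-! Row `j` of `[[1,1],[0,1]]^{⊗m}` is the evaluation vector of the square-free monomial
`∏_{i ∈ S_j} X_i`, where `S_j` is the set of binary digits of `j` equal to one (indexed as in
`rho`); it is nonzero exactly at the points whose digit set contains `S_j`, so its weight
is `2^{m - |S_j|}`, and this is `≥ 2^{m-r}` iff `|S_j| ≤ r`. As `j` varies, `S_j` runs over all
subsets of the variables. On the other side, at points of `F₂^m` every monomial `x^a` agrees with the
square-free monomial on the support of `a`, so `RM(r, m)` is also spanned by the evaluation vectors
of the square-free monomials of degree at most `r`. -/

open MvPolynomial Finset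

lemma div_two_pow_lt_two {m : ℕ} (j : Fin (2 ^ (m + 1))) : (j : ℕ) / 2 ^ m < 2 :=
  Nat.div_lt_of_lt_mul (by simpa [pow_succ] using j.isLt)

lemma kronPow_succ_apply (m : ℕ) (j k : Fin (2 ^ (m + 1))) :
    kronPow (m + 1) j k =
      baseMat ⟨j / 2 ^ m, div_two_pow_lt_two j⟩ ⟨k / 2 ^ m, div_two_pow_lt_two k⟩ *
        kronPow m ⟨j % 2 ^ m, Nat.mod_lt _ (by positivity)⟩
          ⟨k % 2 ^ m, Nat.mod_lt _ (by positivity)⟩ :=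
  rfl

lemma baseMat_apply (a c : Fin 2) :
    baseMat a c = if a = 1 then (if c = 1 then 1 else 0) else 1 := by
  fin_cases a <;> fin_cases c <;> rfl

lemma testBit_iff_div_two_pow_eq_one (m : ℕ) (j : Fin (2 ^ (m + 1))) :
    Nat.testBit j m ↔ (⟨j / 2 ^ m, div_two_pow_lt_two j⟩ : Fin 2) = 1 := by
  rw [Nat.testBit_eq_decide_div_mod_eq, Nat.mod_eq_of_lt (div_two_pow_lt_two j), Fin.ext_iff]
  simp

def bitSet (m : ℕ) (j : Fin (2 ^ m)) : Finset (Fin m) :=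
  univ.filter fun i => Nat.testBit j (m - 1 - i)

lemma mem_bitSet {m : ℕ} {j : Fin (2 ^ m)} {i : Fin m} :
    i ∈ bitSet m j ↔ Nat.testBit j (m - 1 - i) := by
  simp [bitSet]

lemma rho_ne_zero_iff {m : ℕ} {j : Fin (2 ^ m)} {i : Fin m} :
    rho m j i ≠ 0 ↔ i ∈ bitSet m j := by
  simp [rho, mem_bitSet]

lemma kronPow_apply (m : ℕ) (j k : Fin (2 ^ m)) :
    kronPow m j k = ∏ i ∈ bitSet m j, rho m k i := by
  rw [bitSet, prod_filter]
  induction m with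
  | zero => simp [kronPow, Matrix.one_apply, Fin.fin_one_eq_zero j, Fin.fin_one_eq_zero k]
  | succ m ih =>
    rw [kronPow_succ_apply, ih, Fin.prod_univ_succ]
    congr 1
    · simp only [rho, Fin.val_zero, Nat.add_sub_cancel, Nat.sub_zero,
        testBit_iff_div_two_pow_eq_one, baseMat_apply]
    · refine prod_congr rfl fun i _ => ?_
      have hi : m - 1 - i < m := by omega
      simp only [rho, Fin.val_succ, Nat.testBit_mod_two_pow, hi, decide_true, Bool.true_and,
        show m + 1 - 1 - (i + 1) = m - 1 - i by omega]

lemma kronPow_apply_ne_zero_iff (m : ℕ) (j k : Fin (2 ^ m)) :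
    kronPow m j k ≠ 0 ↔ bitSet m j ⊆ bitSet m k := by
  simp only [kronPow_apply, prod_ne_zero_iff, rho_ne_zero_iff, subset_iff]

lemma bitSet_injective (m : ℕ) : Function.Injective (bitSet m) := by
  intro j j' h
  refine Fin.ext (Nat.eq_of_testBit_eq fun n => ?_)
  by_cases hn : n < m
  · have hi : m - 1 - (m - 1 - n) = n := by omega
    simpa only [mem_bitSet, hi, eq_iff_iff, Bool.coe_iff_coe] using
      congrArg ((⟨m - 1 - n, by omega⟩ : Fin m) ∈ ·) h
  · have h2 : 2 ^ m ≤ 2 ^ n := Nat.pow_le_pow_right two_pos (by omega)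
    rw [Nat.testBit_lt_two_pow (j.isLt.trans_le h2),
      Nat.testBit_lt_two_pow (j'.isLt.trans_le h2)]

lemma bitSet_bijective (m : ℕ) : Function.Bijective (bitSet m) := by
  rw [Fintype.bijective_iff_injective_and_card]
  exact ⟨bitSet_injective m, by simp⟩

lemma hammingNorm_kronPow (m : ℕ) (j : Fin (2 ^ m)) :
    hammingNorm (kronPow m j) = 2 ^ (m - #(bitSet m j)) := by
  calc hammingNorm (kronPow m j) = #(Icc (bitSet m j) univ) :=
        card_equiv (Equiv.ofBijective _ (bitSet_bijective m)) fun k => by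
          simp [kronPow_apply_ne_zero_iff]
    _ = 2 ^ (m - #(bitSet m j)) := by
        rw [card_Icc_finset (subset_univ _), card_univ, Fintype.card_fin]

lemma isIdempotentElem_zmod_two (x : ZMod 2) : IsIdempotentElem x := by
  unfold IsIdempotentElem
  revert x
  decide

lemma eval_monomial_eq_mul_eval_prod_X_support {σ : Type*} (x : σ → ZMod 2) (a : σ →₀ ℕ)
    (c : ZMod 2) : eval x (monomial a c) = c * eval x (∏ i ∈ a.support, X i) := by
  rw [eval_monomial, map_prod, Finsupp.prod]
  refine congrArg (c * ·) (prod_congr rfl fun i hi => ?_)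
  obtain ⟨n, hn⟩ := Nat.exists_eq_succ_of_ne_zero (Finsupp.mem_support_iff.mp hi)
  rw [hn, eval_X, (isIdempotentElem_zmod_two (x i)).pow_succ_eq]

lemma card_support_le_sum {σ : Type*} (a : σ →₀ ℕ) : #a.support ≤ a.sum fun _ e => e := by
  simpa [Finsupp.sum] using card_nsmul_le_sum a.support a 1 fun i hi =>
    Nat.one_le_iff_ne_zero.mpr (Finsupp.mem_support_iff.mp hi)

lemma totalDegree_prod_X_le {σ R : Type*} [CommSemiring R] [Nontrivial R] (s : Finset σ) :
    (∏ i ∈ s, X i : MvPolynomial σ R).totalDegree ≤ #s :=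
  (totalDegree_finsetProd _ _).trans (by simp [totalDegree_X])

lemma evalVec_sum {ι : Type*} (m : ℕ) (s : Finset ι) (f : ι → MvPolynomial (Fin m) (ZMod 2)) :
    evalVec m (∑ i ∈ s, f i) = ∑ i ∈ s, evalVec m (f i) := by
  funext k
  simp [evalVec, map_sum]

lemma evalVec_monomial (m : ℕ) (a : Fin m →₀ ℕ) (c : ZMod 2) :
    evalVec m (monomial a c) = c • evalVec m (∏ i ∈ a.support, X i) := by
  funext k
  simp only [evalVec, eval_monomial_eq_mul_eval_prod_X_support, Pi.smul_apply, smul_eq_mul]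

lemma kronPow_eq_evalVec_prod_X (m : ℕ) (j : Fin (2 ^ m)) :
    kronPow m j = evalVec m (∏ i ∈ bitSet m j, X i) := by
  funext k
  simp [evalVec, kronPow_apply, map_prod]

lemma RM_eq_span_evalVec_prod_X (m r : ℕ) :
    RM m r = Submodule.span (ZMod 2)
      {v | ∃ s : Finset (Fin m), #s ≤ r ∧ evalVec m (∏ i ∈ s, X i) = v} := by
  refine le_antisymm (Submodule.span_le.mpr ?_) (Submodule.span_mono ?_)
  · rintro _ ⟨f, hf, rfl⟩
    rw [f.as_sum, evalVec_sum]
    refine Submodule.sum_mem _ fun a ha => ?_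
    rw [evalVec_monomial]
    exact Submodule.smul_mem _ _ (Submodule.subset_span
      ⟨a.support, ((card_support_le_sum a).trans (le_totalDegree ha)).trans hf, rfl⟩)
  · rintro _ ⟨s, hs, rfl⟩
    exact ⟨_, (totalDegree_prod_X_le s).trans hs, rfl⟩

lemma heavy_kronPow_rows_eq (m r : ℕ) :
    {v | ∃ j : Fin (2 ^ m), kronPow m j = v ∧ 2 ^ (m - r) ≤ hammingNorm v} =
      {v | ∃ s : Finset (Fin m), #s ≤ r ∧ evalVec m (∏ i ∈ s, X i) = v} := by
  have weight_iff (s : Finset (Fin m)) : 2 ^ (m - r) ≤ 2 ^ (m - #s) ↔ #s ≤ r := by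
    have : #s ≤ m := by simpa using card_le_univ s
    rw [Nat.pow_le_pow_iff_right (by norm_num)]
    omega
  ext v
  constructor
  · rintro ⟨j, rfl, hw⟩
    rw [hammingNorm_kronPow, weight_iff] at hw
    exact ⟨bitSet m j, hw, (kronPow_eq_evalVec_prod_X m j).symm⟩
  · rintro ⟨s, hs, rfl⟩
    obtain ⟨j, rfl⟩ := (bitSet_bijective m).2 s
    rw [← kronPow_eq_evalVec_prod_X]
    exact ⟨j, rfl, by rwa [hammingNorm_kronPow, weight_iff]⟩

/-- `RM(r, m)` is the span of the rows of `[[1,1],[0,1]]^{⊗ m}` of Hamming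
weight at least `2^{m-r}`. -/
theorem RM_eq_span_heavy_rows_of_kronPow (m r : ℕ) :
    RM m r = Submodule.span (ZMod 2)
      {v | ∃ j : Fin (2^m), kronPow m j = v ∧ 2^(m - r) ≤ hammingNorm v} := by
  rw [heavy_kronPow_rows_eq, RM_eq_span_evalVec_prod_X]
end

section
/- Uniqueness of leading entry: for the canonical generator matrix of RM(r, m) whose rows are the evaluation vectors of distinct monomials x_A with |A| <= r, the column index of the leading (first) nonzero entry of each row is distinct across all rows. -/
open scoped BigOperators

/-- The monomial `x_A = ∏_{i ∈ A} x_i`. -/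
noncomputable def monom (m : ℕ) (A : Finset (Fin m)) : MvPolynomial (Fin m) (ZMod 2) :=
  ∏ i ∈ A, MvPolynomial.X i

lemma evalVec_monom_ne_zero_iff (m : ℕ) (A : Finset (Fin m)) (j : Fin (2^m)) :
    evalVec m (monom m A) j ≠ 0 ↔
      ∀ i ∈ A, Nat.testBit (j : ℕ) (m - 1 - i.val) = true := by
  simp only [evalVec, monom, map_prod, MvPolynomial.eval_X]
  rw [Finset.prod_ne_zero_iff]
  refine forall_congr' fun i => forall_congr' fun hi => ?_
  unfold rho
  by_cases h : Nat.testBit (j : ℕ) (m - 1 - i.val) <;> simp [h]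

lemma mem_iff_testBit (m : ℕ) (A : Finset (Fin m)) (jA : Fin (2^m))
    (hjA : evalVec m (monom m A) jA ≠ 0 ∧
      ∀ j : Fin (2^m), j < jA → evalVec m (monom m A) j = 0) :
    ∀ i : Fin m, i ∈ A ↔ Nat.testBit (jA : ℕ) (m - 1 - i.val) = true := by
  intro i
  constructor
  · exact fun hi => (evalVec_monom_ne_zero_iff m A jA).1 hjA.1 i hi
  · intro hbit
    by_contra hi
    set k := m - 1 - i.val with hk
    set n := (jA : ℕ) ^^^ 2 ^ k with hn
    have htb : ∀ t : ℕ, n.testBit t = ((jA : ℕ).testBit t).xor ((2 ^ k).testBit t) := by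
      intro t; simp [hn, Nat.testBit_xor]
    have hnk : n.testBit k = false := by
      rw [htb k, hbit, Nat.testBit_two_pow_self]; decide
    have hlt : n < (jA : ℕ) := by
      refine Nat.lt_of_testBit k hnk hbit fun t ht => ?_
      rw [htb t, Nat.testBit_two_pow_of_ne (by omega : k ≠ t)]
      simp
    have hj' : n < 2 ^ m := lt_trans hlt jA.isLt
    refine (evalVec_monom_ne_zero_iff m A ⟨n, hj'⟩).2 ?_ (hjA.2 ⟨n, hj'⟩ (by exact hlt))
    intro i' hi'
    have hne : m - 1 - i'.val ≠ k := by
      have h1 := i.isLt; have h2 := i'.isLt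
      have : i'.val ≠ i.val := fun h => hi (Fin.ext h ▸ hi')
      omega
    show Nat.testBit n (m - 1 - i'.val) = true
    rw [htb, Nat.testBit_two_pow_of_ne (Ne.symm hne)]
    have := (evalVec_monom_ne_zero_iff m A jA).1 hjA.1 i' hi'
    simp [this]

/-- Uniqueness of the leading entry: the rows of the canonical generator matrix
of `RM(r, m)` (evaluation vectors of monomials `x_A`, `|A| ≤ r`) have pairwise
distinct leading (first nonzero) column indices. -/
theorem RM_leading_entry_unique (m r : ℕ) (A B : Finset (Fin m))
    (hA : A.card ≤ r) (hB : B.card ≤ r) (jA jB : Fin (2^m))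
    (hjA : evalVec m (monom m A) jA ≠ 0 ∧
      ∀ j : Fin (2^m), j < jA → evalVec m (monom m A) j = 0)
    (hjB : evalVec m (monom m B) jB ≠ 0 ∧
      ∀ j : Fin (2^m), j < jB → evalVec m (monom m B) j = 0)
    (hEq : jA = jB) : A = B := by
  subst hEq
  ext i
  rw [mem_iff_testBit m A jA hjA i, mem_iff_testBit m B jA hjB i]
end

section
/- Recursive construction of QRM codewords: for ceil((m-1)/2) <= r < m and w = (w_1, w_2) in RM(r, m) with w_1, w_2 in RM(r, m-1), the QRM(r,m) codeword |w>_{r,m} = (1/sqrt(|RM(m-r-1,m)|)) sum_{c in RM(m-r-1,m)} |w + c> equals (1/sqrt(|B|)) sum_{u in B} |w_1 + u>_{r,m-1} tensor |w_2 + u>_{r,m-1}, where B is a set of coset representatives of RM(m-r-1, m-1) / RM(m-r-2, m-1). -/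
open scoped BigOperators

/-- The Reed-Muller code `RM(r, m)` with integer order (so `RM(-1, m) = 0`). -/
noncomputable def RMz (m : ℕ) (r : ℤ) : Submodule (ZMod 2) (Fin (2^m) → ZMod 2) :=
  Submodule.span (ZMod 2)
    {v | ∃ f : MvPolynomial (Fin m) (ZMod 2), (f.totalDegree : ℤ) ≤ r ∧ evalVec m f = v}

open Classical in
/-- The uniform superposition `(1/√|C|) ∑_{c ∈ C} |w + c⟩` over the coset `w + C`. -/
noncomputable def cosetKet {n : ℕ} (C : Submodule (ZMod 2) (Fin n → ZMod 2))
    (w : Fin n → ZMod 2) : (Fin n → ZMod 2) → ℂ :=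
  fun b => if b + w ∈ C then ((1 / Real.sqrt (Nat.card C) : ℝ) : ℂ) else 0

/-- The first half (first `2^m` coordinates) of a length-`2^{m+1}` vector. -/
def lowHalf (m : ℕ) (b : Fin (2^(m+1)) → ZMod 2) : Fin (2^m) → ZMod 2 :=
  fun i => b ⟨i, by have hi := i.isLt; have h : 2^(m+1) = 2^m * 2 := pow_succ 2 m; omega⟩

/-- The second half (last `2^m` coordinates) of a length-`2^{m+1}` vector. -/
def highHalf (m : ℕ) (b : Fin (2^(m+1)) → ZMod 2) : Fin (2^m) → ZMod 2 :=
  fun i => b ⟨2^m + i, by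
    have hi := i.isLt; have h : 2^(m+1) = 2^m * 2 := pow_succ 2 m; omega⟩

namespace QRMAux

open MvPolynomial

/-- Embedding of low indices. -/
def embLow (m : ℕ) (i : Fin (2^m)) : Fin (2^(m+1)) :=
  ⟨i, by have hi := i.isLt; have h : 2^(m+1) = 2^m * 2 := pow_succ 2 m; omega⟩

/-- Embedding of high indices. -/
def embHigh (m : ℕ) (i : Fin (2^m)) : Fin (2^(m+1)) :=
  ⟨2^m + i, by have hi := i.isLt; have h : 2^(m+1) = 2^m * 2 := pow_succ 2 m; omega⟩

/-- Folding map. -/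
def fold (m : ℕ) (j : Fin (2^(m+1))) : Fin (2^m) :=
  if h : (j : ℕ) < 2^m then ⟨j, h⟩
  else ⟨(j : ℕ) - 2^m, by
    have hj := j.isLt; have h2 : 2^(m+1) = 2^m * 2 := pow_succ 2 m; omega⟩

lemma fold_embLow (m : ℕ) (i : Fin (2^m)) : fold m (embLow m i) = i := by
  simp [fold, embLow]

lemma fold_embHigh (m : ℕ) (i : Fin (2^m)) : fold m (embHigh m i) = i := by
  have : ¬ (2^m + (i:ℕ) < 2^m) := by omega
  simp [fold, embHigh, this]

lemma rho_fold (m : ℕ) (j : Fin (2^(m+1))) :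
    rho (m+1) j = Fin.cons (if (j : ℕ) < 2^m then 0 else 1) (rho m (fold m j)) := by
  funext i
  refine Fin.cases ?_ (fun i => ?_) i
  · rw [Fin.cons_zero]
    show (if Nat.testBit (j : ℕ) (m + 1 - 1 - 0) then (1:ZMod 2) else 0) = _
    by_cases h : (j : ℕ) < 2^m
    · rw [if_pos h]
      simp only [show m + 1 - 1 - 0 = m from by omega]
      simp [Nat.testBit_lt_two_pow h]
    · rw [if_neg h]
      have hj := j.isLt
      have h2 : 2^(m+1) = 2^m * 2 := pow_succ 2 m
      have hrep : (j : ℕ) = 2^m + ((j:ℕ) - 2^m) := by omega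
      have hlt : (j:ℕ) - 2^m < 2^m := by omega
      have : Nat.testBit (j : ℕ) m = true := by
        rw [hrep, Nat.testBit_two_pow_add_eq, Nat.testBit_lt_two_pow hlt]
        rfl
      have hm : m + 1 - 1 - 0 = m := by omega
      simp [hm, this]
  · rw [Fin.cons_succ]
    show (if Nat.testBit (j : ℕ) (m + 1 - 1 - ((i:ℕ)+1)) then (1:ZMod 2) else 0)
      = (if Nat.testBit ((fold m j : Fin (2^m)) : ℕ) (m - 1 - (i:ℕ)) then (1:ZMod 2) else 0)
    have hmi : m + 1 - 1 - ((i:ℕ)+1) = m - 1 - (i:ℕ) := by omega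
    rw [hmi]
    by_cases h : (j : ℕ) < 2^m
    · have : ((fold m j : Fin (2^m)) : ℕ) = (j : ℕ) := by simp [fold, h]
      rw [this]
    · have hval : ((fold m j : Fin (2^m)) : ℕ) = (j : ℕ) - 2^m := by simp [fold, h]
      have hj := j.isLt
      have h2 : 2^(m+1) = 2^m * 2 := pow_succ 2 m
      have hrep : (j : ℕ) = 2^m + ((j:ℕ) - 2^m) := by omega
      have hi := i.isLt
      have hklt : m - 1 - (i:ℕ) < m := by omega
      have hbit : Nat.testBit (j : ℕ) (m - 1 - (i:ℕ))
          = Nat.testBit ((j:ℕ) - 2^m) (m - 1 - (i:ℕ)) := by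
        conv_lhs => rw [hrep]
        exact Nat.testBit_two_pow_add_gt hklt _
      rw [hval, hbit]

lemma rho_embLow (m : ℕ) (i : Fin (2^m)) :
    rho (m+1) (embLow m i) = Fin.cons 0 (rho m i) := by
  rw [rho_fold, fold_embLow]
  have : ((embLow m i : Fin (2^(m+1))) : ℕ) < 2^m := i.isLt
  rw [if_pos this]

lemma rho_embHigh (m : ℕ) (i : Fin (2^m)) :
    rho (m+1) (embHigh m i) = Fin.cons 1 (rho m i) := by
  rw [rho_fold, fold_embHigh]
  have : ¬ ((embHigh m i : Fin (2^(m+1))) : ℕ) < 2^m := by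
    show ¬ (2^m + (i:ℕ) < 2^m); omega
  rw [if_neg this]

/-- Linear map taking a vector to its low half. -/
noncomputable def lowL (m : ℕ) :
    (Fin (2^(m+1)) → ZMod 2) →ₗ[ZMod 2] (Fin (2^m) → ZMod 2) :=
  LinearMap.funLeft (ZMod 2) (ZMod 2) (embLow m)

/-- Linear map taking a vector to its high half. -/
noncomputable def highL (m : ℕ) :
    (Fin (2^(m+1)) → ZMod 2) →ₗ[ZMod 2] (Fin (2^m) → ZMod 2) :=
  LinearMap.funLeft (ZMod 2) (ZMod 2) (embHigh m)

/-- Duplication linear map `u ↦ (u, u)`. -/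
noncomputable def dupL (m : ℕ) :
    (Fin (2^m) → ZMod 2) →ₗ[ZMod 2] (Fin (2^(m+1)) → ZMod 2) :=
  LinearMap.funLeft (ZMod 2) (ZMod 2) (fold m)

/-- The linear map `v ↦ (0, v)`. -/
noncomputable def zL (m : ℕ) :
    (Fin (2^m) → ZMod 2) →ₗ[ZMod 2] (Fin (2^(m+1)) → ZMod 2) where
  toFun v := fun j => if (j : ℕ) < 2^m then 0 else v (fold m j)
  map_add' x y := by funext j; by_cases h : (j:ℕ) < 2^m <;> simp [h]
  map_smul' c x := by funext j; by_cases h : (j:ℕ) < 2^m <;> simp [h]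

lemma lowL_apply (m : ℕ) (b : Fin (2^(m+1)) → ZMod 2) : lowL m b = lowHalf m b := rfl

lemma highL_apply (m : ℕ) (b : Fin (2^(m+1)) → ZMod 2) : highL m b = highHalf m b := rfl

lemma RMz_mono (n : ℕ) {s s' : ℤ} (h : s ≤ s') : RMz n s ≤ RMz n s' :=
  Submodule.span_mono (by rintro v ⟨f, hf, he⟩; exact ⟨f, hf.trans h, he⟩)

lemma RMz_le_comap {n n' : ℕ} {s s' : ℤ}
    (L : (Fin (2^n) → ZMod 2) →ₗ[ZMod 2] (Fin (2^n') → ZMod 2))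
    (h : ∀ f : MvPolynomial (Fin n) (ZMod 2), (f.totalDegree : ℤ) ≤ s →
      L (evalVec n f) ∈ RMz n' s') :
    RMz n s ≤ Submodule.comap L (RMz n' s') := by
  rw [RMz, Submodule.span_le]
  rintro v ⟨f, hf, rfl⟩
  exact h f hf

lemma eval_monomial_pi {n : ℕ} (p : Fin n → ZMod 2) (a : Fin n →₀ ℕ) :
    MvPolynomial.eval p (monomial a (1 : ZMod 2)) = ∏ i, p i ^ a i := by
  rw [eval_monomial, one_mul, Finsupp.prod_pow]

lemma evalVec_monomial_pi {n : ℕ} (a : Fin n →₀ ℕ) (j : Fin (2^n)) :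
    evalVec n (monomial a (1 : ZMod 2)) j = ∏ i, rho n j i ^ a i :=
  eval_monomial_pi _ _

/-- The tail of a finitely supported exponent vector. -/
noncomputable def ftail {n : ℕ} (a : Fin (n+1) →₀ ℕ) : Fin n →₀ ℕ :=
  Finsupp.equivFunOnFinite.symm (fun i => a i.succ)

@[simp] lemma ftail_apply {n : ℕ} (a : Fin (n+1) →₀ ℕ) (i : Fin n) :
    ftail a i = a i.succ := by
  simp [ftail]

lemma finsupp_sum_eq {n : ℕ} (a : Fin n →₀ ℕ) :
    (a.sum fun _ e => e) = ∑ i, a i :=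
  Finsupp.sum_fintype _ _ (fun _ => rfl)

lemma totalDegree_monomial_one {n : ℕ} (a : Fin n →₀ ℕ) :
    (monomial a (1 : ZMod 2)).totalDegree = ∑ i, a i := by
  rw [totalDegree_monomial _ one_ne_zero, finsupp_sum_eq]

lemma evalVec_decomp (n : ℕ) (f : MvPolynomial (Fin n) (ZMod 2)) :
    evalVec n f = ∑ a ∈ f.support, MvPolynomial.coeff a f • evalVec n (monomial a 1) := by
  funext j
  show MvPolynomial.eval (rho n j) f = _
  conv_lhs => rw [← support_sum_monomial_coeff f]
  rw [map_sum, Finset.sum_apply]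
  refine Finset.sum_congr rfl (fun a _ => ?_)
  rw [eval_monomial]
  simp [evalVec, eval_monomial, mul_comm]

lemma L_evalVec_mem {n n' : ℕ} (s' : ℤ)
    (L : (Fin (2^n) → ZMod 2) →ₗ[ZMod 2] (Fin (2^n') → ZMod 2))
    (f : MvPolynomial (Fin n) (ZMod 2))
    (h : ∀ a ∈ f.support, L (evalVec n (monomial a 1)) ∈ RMz n' s') :
    L (evalVec n f) ∈ RMz n' s' := by
  rw [evalVec_decomp n f, map_sum]
  refine Submodule.sum_mem _ (fun a ha => ?_)
  rw [map_smul]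
  exact Submodule.smul_mem _ _ (h a ha)

lemma evalVec_mem {n : ℕ} {s : ℤ} (f : MvPolynomial (Fin n) (ZMod 2))
    (h : (f.totalDegree : ℤ) ≤ s) : evalVec n f ∈ RMz n s :=
  Submodule.subset_span ⟨f, h, rfl⟩

lemma lowL_monomial (m : ℕ) (a : Fin (m+1) →₀ ℕ) :
    lowL m (evalVec (m+1) (monomial a 1)) =
      if a 0 = 0 then evalVec m (monomial (ftail a) 1) else 0 := by
  funext i
  show evalVec (m+1) (monomial a 1) (embLow m i) = _
  rw [evalVec_monomial_pi, rho_embLow, Fin.prod_univ_succ]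
  simp only [Fin.cons_zero, Fin.cons_succ]
  by_cases h : a 0 = 0
  · rw [if_pos h, h, pow_zero, one_mul]
    rw [evalVec_monomial_pi]
    exact Finset.prod_congr rfl (fun i' _ => by rw [ftail_apply])
  · rw [if_neg h, zero_pow h, zero_mul, Pi.zero_apply]

lemma highL_monomial (m : ℕ) (a : Fin (m+1) →₀ ℕ) :
    highL m (evalVec (m+1) (monomial a 1)) = evalVec m (monomial (ftail a) 1) := by
  funext i
  show evalVec (m+1) (monomial a 1) (embHigh m i) = _
  rw [evalVec_monomial_pi, rho_embHigh, Fin.prod_univ_succ]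
  simp only [Fin.cons_zero, Fin.cons_succ, one_pow, one_mul]
  rw [evalVec_monomial_pi]
  exact Finset.prod_congr rfl (fun i' _ => by rw [ftail_apply])

lemma monomial_deg_le {m : ℕ} {s : ℤ} {f : MvPolynomial (Fin (m+1)) (ZMod 2)}
    (hf : (f.totalDegree : ℤ) ≤ s) {a : Fin (m+1) →₀ ℕ} (ha : a ∈ f.support) :
    ((∑ i, a i : ℕ) : ℤ) ≤ s := by
  have h1 : (a.sum fun _ e => e) ≤ f.totalDegree := MvPolynomial.le_totalDegree ha
  rw [finsupp_sum_eq] at h1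
  exact le_trans (by exact_mod_cast h1) hf

lemma lowL_mem (m : ℕ) (s : ℤ) :
    RMz (m+1) s ≤ Submodule.comap (lowL m) (RMz m s) := by
  refine RMz_le_comap _ (fun f hf => ?_)
  refine L_evalVec_mem _ _ _ (fun a ha => ?_)
  rw [lowL_monomial]
  by_cases h : a 0 = 0
  · rw [if_pos h]
    refine evalVec_mem _ ?_
    rw [totalDegree_monomial_one]
    have hs := monomial_deg_le hf ha
    have hsum : ∑ i, (ftail a) i ≤ ∑ i, a i := by
      rw [Fin.sum_univ_succ]
      simp only [ftail_apply]
      omega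
    calc ((∑ i, (ftail a) i : ℕ) : ℤ) ≤ ((∑ i, a i : ℕ) : ℤ) := by exact_mod_cast hsum
      _ ≤ s := hs
  · rw [if_neg h]; exact Submodule.zero_mem _

lemma addL_mem (m : ℕ) (s : ℤ) :
    RMz (m+1) s ≤ Submodule.comap (lowL m + highL m) (RMz m (s-1)) := by
  refine RMz_le_comap _ (fun f hf => ?_)
  refine L_evalVec_mem _ _ _ (fun a ha => ?_)
  rw [LinearMap.add_apply, lowL_monomial, highL_monomial]
  by_cases h : a 0 = 0
  · rw [if_pos h]
    have : evalVec m (monomial (ftail a) 1) + evalVec m (monomial (ftail a) 1) = 0 := by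
      funext i; exact CharTwo.add_self_eq_zero _
    rw [this]
    exact Submodule.zero_mem _
  · rw [if_neg h, zero_add]
    refine evalVec_mem _ ?_
    rw [totalDegree_monomial_one]
    have hs := monomial_deg_le hf ha
    have h1 : 1 ≤ a 0 := Nat.one_le_iff_ne_zero.mpr h
    have hsum : ∑ i, (ftail a) i + a 0 = ∑ i, a i := by
      rw [Fin.sum_univ_succ]
      simp only [ftail_apply]
      omega
    omega

lemma dupL_eval (m : ℕ) (f : MvPolynomial (Fin m) (ZMod 2)) :
    dupL m (evalVec m f) = evalVec (m+1) (rename Fin.succ f) := by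
  funext j
  show evalVec m f (fold m j) = MvPolynomial.eval (rho (m+1) j) (rename Fin.succ f)
  rw [eval_rename]
  have : rho (m+1) j ∘ Fin.succ = rho m (fold m j) := by
    funext i
    rw [rho_fold]
    simp [Function.comp]
  rw [this]
  rfl

lemma dupL_mem (m : ℕ) (s : ℤ) :
    RMz m s ≤ Submodule.comap (dupL m) (RMz (m+1) s) := by
  refine RMz_le_comap _ (fun f hf => ?_)
  rw [dupL_eval]
  refine evalVec_mem _ (le_trans ?_ hf)
  exact_mod_cast totalDegree_rename_le Fin.succ f

lemma zL_eval (m : ℕ) (f : MvPolynomial (Fin m) (ZMod 2)) :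
    zL m (evalVec m f) = evalVec (m+1) (X 0 * rename Fin.succ f) := by
  funext j
  show (if (j : ℕ) < 2^m then 0 else evalVec m f (fold m j))
      = MvPolynomial.eval (rho (m+1) j) (X 0 * rename Fin.succ f)
  rw [map_mul, eval_X, eval_rename, rho_fold]
  have hc : (Fin.cons (if (j:ℕ) < 2^m then (0:ZMod 2) else 1) (rho m (fold m j))) ∘ Fin.succ
      = rho m (fold m j) := by
    funext i; simp [Function.comp]
  rw [hc, Fin.cons_zero]
  by_cases h : (j:ℕ) < 2^m
  · simp [h]
  · simp [h]; rfl

lemma zL_mem (m : ℕ) (s : ℤ) :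
    RMz m (s-1) ≤ Submodule.comap (zL m) (RMz (m+1) s) := by
  refine RMz_le_comap _ (fun f hf => ?_)
  rw [zL_eval]
  refine evalVec_mem _ ?_
  have h1 : (X 0 * rename Fin.succ f).totalDegree
      ≤ (X (0 : Fin (m+1)) : MvPolynomial (Fin (m+1)) (ZMod 2)).totalDegree
        + (rename Fin.succ f).totalDegree := totalDegree_mul _ _
  have h2 : (X (0 : Fin (m+1)) : MvPolynomial (Fin (m+1)) (ZMod 2)).totalDegree = 1 :=
    totalDegree_X _
  have h3 : (rename Fin.succ f).totalDegree ≤ f.totalDegree := totalDegree_rename_le _ _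
  have h4 := f.totalDegree
  omega

lemma add_self_pi {n : ℕ} (x : Fin n → ZMod 2) : x + x = 0 := by
  funext i; exact CharTwo.add_self_eq_zero _

lemma add_add_cancel_pi {n : ℕ} (x y : Fin n → ZMod 2) : x + (x + y) = y := by
  rw [← add_assoc, add_self_pi, zero_add]

lemma add_cancel_right_pi {n : ℕ} (x y : Fin n → ZMod 2) : x + y + y = x := by
  rw [add_assoc, add_self_pi, add_zero]

lemma lowHalf_recon (m : ℕ) (x v : Fin (2^m) → ZMod 2) :
    lowHalf m (dupL m x + zL m v) = x := by
  funext i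
  show (dupL m x + zL m v) (embLow m i) = x i
  have h : ((embLow m i : Fin (2^(m+1))) : ℕ) < 2^m := i.isLt
  show x (fold m (embLow m i)) + (if ((embLow m i : Fin (2^(m+1))) : ℕ) < 2^m then 0
      else v (fold m (embLow m i))) = x i
  rw [if_pos h, fold_embLow, add_zero]

lemma highHalf_recon (m : ℕ) (x v : Fin (2^m) → ZMod 2) :
    highHalf m (dupL m x + zL m v) = x + v := by
  funext i
  have h : ¬ ((embHigh m i : Fin (2^(m+1))) : ℕ) < 2^m := by
    show ¬ (2^m + (i:ℕ) < 2^m); omega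
  show x (fold m (embHigh m i)) + (if ((embHigh m i : Fin (2^(m+1))) : ℕ) < 2^m then 0
      else v (fold m (embHigh m i))) = x i + v i
  rw [if_neg h, fold_embHigh]

lemma recon (m : ℕ) (b : Fin (2^(m+1)) → ZMod 2) :
    dupL m (lowHalf m b) + zL m (lowHalf m b + highHalf m b) = b := by
  funext j
  show lowHalf m b (fold m j) + (if (j:ℕ) < 2^m then 0
      else (lowHalf m b + highHalf m b) (fold m j)) = b j
  by_cases h : (j:ℕ) < 2^m
  · rw [if_pos h, add_zero]
    show b (embLow m (fold m j)) = b j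
    congr 1
    apply Fin.ext
    simp [embLow, fold, h]
  · rw [if_neg h]
    show lowHalf m b (fold m j) + (lowHalf m b (fold m j) + highHalf m b (fold m j)) = b j
    rw [← add_assoc, CharTwo.add_self_eq_zero, zero_add]
    show b (embHigh m (fold m j)) = b j
    congr 1
    apply Fin.ext
    have hj := j.isLt
    have h2 : 2^(m+1) = 2^m * 2 := pow_succ 2 m
    show 2^m + ((fold m j : Fin (2^m)) : ℕ) = (j : ℕ)
    simp only [fold, dif_neg h]
    omega

lemma plotkin (m : ℕ) (s : ℤ) (b : Fin (2^(m+1)) → ZMod 2) :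
    b ∈ RMz (m+1) s ↔
      lowHalf m b ∈ RMz m s ∧ lowHalf m b + highHalf m b ∈ RMz m (s-1) := by
  constructor
  · intro hb
    refine ⟨?_, ?_⟩
    · have := lowL_mem m s hb
      rwa [Submodule.mem_comap, lowL_apply] at this
    · have := addL_mem m s hb
      rw [Submodule.mem_comap, LinearMap.add_apply, lowL_apply, highL_apply] at this
      exact this
  · rintro ⟨hx, hv⟩
    rw [← recon m b]
    exact Submodule.add_mem _ (dupL_mem m s hx) (zL_mem m s hv)

lemma card_plotkin (m : ℕ) (s : ℤ) :
    Nat.card (RMz (m+1) s) = Nat.card (RMz m s) * Nat.card (RMz m (s-1)) := by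
  have e : (RMz (m+1) s) ≃ ((RMz m s) × (RMz m (s-1))) :=
    { toFun := fun b => ⟨⟨lowHalf m b, ((plotkin m s b).1 b.2).1⟩,
        ⟨lowHalf m b + highHalf m b, ((plotkin m s b).1 b.2).2⟩⟩
      invFun := fun p => ⟨dupL m p.1 + zL m p.2, (plotkin m s _).2
        (by rw [lowHalf_recon, highHalf_recon]
            exact ⟨p.1.2, by rw [add_add_cancel_pi]; exact p.2.2⟩)⟩
      left_inv := by
        rintro ⟨b, hb⟩
        exact Subtype.ext (recon m b)
      right_inv := by
        rintro ⟨⟨x, hx⟩, ⟨v, hv⟩⟩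
        refine Prod.ext ?_ ?_
        · exact Subtype.ext (by simp [lowHalf_recon])
        · refine Subtype.ext ?_
          show lowHalf m _ + highHalf m _ = v
          rw [lowHalf_recon, highHalf_recon, add_add_cancel_pi] }
  rw [Nat.card_congr e, Nat.card_prod]
lemma card_coset (m : ℕ) (s : ℤ) (B : Finset (Fin (2^m) → ZMod 2))
    (hB₁ : ∀ u ∈ B, u ∈ RMz m s)
    (hB₂ : ∀ v ∈ RMz m s, ∃! u, u ∈ B ∧ v + u ∈ RMz m (s-1)) :
    Nat.card (RMz m s) = B.card * Nat.card (RMz m (s-1)) := by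
  have hDE : RMz m (s-1) ≤ RMz m s := RMz_mono m (by omega)
  have e : (RMz m s) ≃ (↥B × (RMz m (s-1))) :=
    { toFun := fun v => ⟨⟨(hB₂ v v.2).choose, (hB₂ v v.2).choose_spec.1.1⟩,
        ⟨(v : Fin (2^m) → ZMod 2) + (hB₂ v v.2).choose, (hB₂ v v.2).choose_spec.1.2⟩⟩
      invFun := fun p => ⟨(p.2 : Fin (2^m) → ZMod 2) + (p.1 : Fin (2^m) → ZMod 2),
        Submodule.add_mem _ (hDE p.2.2) (hB₁ p.1 p.1.2)⟩
      left_inv := by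
        rintro ⟨v, hv⟩
        exact Subtype.ext (add_cancel_right_pi v _)
      right_inv := by
        rintro ⟨⟨u, hu⟩, ⟨d, hd⟩⟩
        have hv : d + u ∈ RMz m s := Submodule.add_mem _ (hDE hd) (hB₁ u hu)
        have hueq : (hB₂ (d + u) hv).choose = u := by
          refine ((hB₂ (d + u) hv).choose_spec.2 u ⟨hu, ?_⟩).symm
          rw [add_cancel_right_pi]
          exact hd
        refine Prod.ext (Subtype.ext ?_) (Subtype.ext ?_)
        · exact hueq
        · show d + u + (hB₂ (d + u) hv).choose = d
          rw [hueq, add_cancel_right_pi] }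
  rw [Nat.card_congr e, Nat.card_prod, Nat.card_eq_finsetCard]
lemma lowHalf_add (m : ℕ) (b w : Fin (2^(m+1)) → ZMod 2) :
    lowHalf m (b + w) = lowHalf m b + lowHalf m w := rfl

lemma highHalf_add (m : ℕ) (b w : Fin (2^(m+1)) → ZMod 2) :
    highHalf m (b + w) = highHalf m b + highHalf m w := rfl

end QRMAux

open QRMAux in
/-- Recursive construction of QRM codewords: for `⌈((m+1)-1)/2⌉ ≤ r < m+1` and
`w ∈ RM(r, m+1)`, the `QRM(r, m+1)` codeword `|w⟩_{r,m+1}` (the uniform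
superposition over `w + RM((m+1)-r-1, m+1)`) equals
`(1/√|B|) ∑_{u ∈ B} |w₁+u⟩_{r,m} ⊗ |w₂+u⟩_{r,m}` for any set `B` of coset
representatives of `RM(m-r-1, m) / RM(m-r-2, m)`, where `w = (w₁, w₂)`. -/
theorem QRM_recursive_decomposition (m r : ℕ)
    (hr₁ : (m + 1) / 2 ≤ r) (hr₂ : r < m + 1)
    (w : Fin (2^(m+1)) → ZMod 2) (hw : w ∈ RMz (m+1) (r : ℤ))
    (B : Finset (Fin (2^m) → ZMod 2))
    (hB₁ : ∀ u ∈ B, u ∈ RMz m ((m : ℤ) - r))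
    (hB₂ : ∀ v ∈ RMz m ((m : ℤ) - r), ∃! u, u ∈ B ∧ v + u ∈ RMz m ((m : ℤ) - r - 1)) :
    cosetKet (RMz (m+1) ((m : ℤ) - r)) w = fun b =>
      ((1 / Real.sqrt B.card : ℝ) : ℂ) *
        ∑ u ∈ B,
          cosetKet (RMz m ((m : ℤ) - r - 1)) (lowHalf m w + u) (lowHalf m b) *
            cosetKet (RMz m ((m : ℤ) - r - 1)) (highHalf m w + u) (highHalf m b) := by
  classical
  funext b
  set s : ℤ := (m : ℤ) - r with hs
  set D := RMz m (s - 1) with hD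
  set E := RMz m s with hE
  set C := RMz (m+1) s with hC
  have hDE : D ≤ E := RMz_mono m (by omega)
  have hDfin : Nonempty D := ⟨⟨0, Submodule.zero_mem _⟩⟩
  have hDpos : 0 < Nat.card D := Nat.card_pos
  have hBpos : 0 < B.card := by
    obtain ⟨u, hu, -⟩ := (hB₂ 0 (Submodule.zero_mem _)).exists
    exact Finset.card_pos.mpr ⟨u, hu⟩
  have hcardC : Nat.card C = B.card * Nat.card D * Nat.card D := by
    rw [hC, card_plotkin m s, card_coset m s B hB₁ hB₂]
  set x := lowHalf m b + lowHalf m w with hx_def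
  set y := highHalf m b + highHalf m w with hy_def
  simp only [cosetKet]
  by_cases hbw : b + w ∈ C
  · rw [if_pos hbw]
    obtain ⟨hx, hxy⟩ := (plotkin m s (b + w)).1 hbw
    rw [lowHalf_add] at hx
    rw [lowHalf_add, highHalf_add] at hxy
    have hxy' : x + y ∈ D := by
      have : lowHalf m b + lowHalf m w + (highHalf m b + highHalf m w) = x + y := rfl
      rwa [this] at hxy
    obtain ⟨u₀, ⟨hu₀B, hu₀D⟩, huniq⟩ := hB₂ x hx
    have hsum : ∑ u ∈ B,
        (if lowHalf m b + (lowHalf m w + u) ∈ D then ((1 / Real.sqrt (Nat.card D) : ℝ) : ℂ) else 0) *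
        (if highHalf m b + (highHalf m w + u) ∈ D then ((1 / Real.sqrt (Nat.card D) : ℝ) : ℂ) else 0)
        = ((1 / Real.sqrt (Nat.card D) : ℝ) : ℂ) * ((1 / Real.sqrt (Nat.card D) : ℝ) : ℂ) := by
      rw [Finset.sum_eq_single_of_mem u₀ hu₀B]
      · have hc1 : lowHalf m b + (lowHalf m w + u₀) ∈ D := by
          rw [← add_assoc]; exact hu₀D
        have hc2 : highHalf m b + (highHalf m w + u₀) ∈ D := by
          have heq : highHalf m b + (highHalf m w + u₀) = (x + y) + (x + u₀) := by
            have : (x + y) + (x + u₀) = (x + x) + (y + u₀) := by abel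
            rw [this, add_self_pi, zero_add, hy_def, add_assoc]
          rw [heq]
          exact Submodule.add_mem _ hxy' hu₀D
        rw [if_pos hc1, if_pos hc2]
      · intro u hu hne
        have hc1 : ¬ (lowHalf m b + (lowHalf m w + u) ∈ D) := by
          intro hmem
          rw [← add_assoc] at hmem
          exact hne (huniq u ⟨hu, hmem⟩)
        rw [if_neg hc1, zero_mul]
    rw [hsum]
    have hR : (1 / Real.sqrt (Nat.card C) : ℝ)
        = (1 / Real.sqrt B.card) * ((1 / Real.sqrt (Nat.card D)) * (1 / Real.sqrt (Nat.card D))) := by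
      have hb0 : (0:ℝ) ≤ (B.card : ℝ) := Nat.cast_nonneg _
      have hbd0 : (0:ℝ) ≤ (B.card : ℝ) * (Nat.card D : ℝ) :=
        mul_nonneg hb0 (Nat.cast_nonneg _)
      rw [hcardC, Nat.cast_mul, Nat.cast_mul]
      rw [Real.sqrt_mul hbd0, Real.sqrt_mul hb0]
      rw [div_mul_div_comm, div_mul_div_comm, one_mul, one_mul, mul_assoc]
    rw [hR]
    push_cast
    ring
  · rw [if_neg hbw]
    symm
    have hsum0 : ∑ u ∈ B,
        (if lowHalf m b + (lowHalf m w + u) ∈ D then ((1 / Real.sqrt (Nat.card D) : ℝ) : ℂ) else 0) *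
        (if highHalf m b + (highHalf m w + u) ∈ D then ((1 / Real.sqrt (Nat.card D) : ℝ) : ℂ) else 0)
        = 0 := by
      refine Finset.sum_eq_zero (fun u hu => ?_)
      by_cases hc1 : lowHalf m b + (lowHalf m w + u) ∈ D
      · by_cases hc2 : highHalf m b + (highHalf m w + u) ∈ D
        · exfalso
          apply hbw
          have hxu : x + u ∈ D := by rwa [← add_assoc] at hc1
          have hyu : y + u ∈ D := by rwa [← add_assoc] at hc2
          have hxE : x ∈ E := by
            have : x = (x + u) + u := (add_cancel_right_pi x u).symm
            rw [this]
            exact Submodule.add_mem _ (hDE hxu) (hB₁ u hu)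
          have hxyD : x + y ∈ D := by
            have : x + y = (x + u) + (y + u) := by
              have h2 : (x + u) + (y + u) = (x + y) + (u + u) := by abel
              rw [h2, add_self_pi, add_zero]
            rw [this]
            exact Submodule.add_mem _ hxu hyu
          refine (plotkin m s (b + w)).2 ⟨?_, ?_⟩
          · rw [lowHalf_add]; exact hxE
          · rw [lowHalf_add, highHalf_add]
            have : lowHalf m b + lowHalf m w + (highHalf m b + highHalf m w) = x + y := rfl
            rwa [this]
        · rw [if_neg hc2, mul_zero]
      · rw [if_neg hc1, zero_mul]
    rw [hsum0, mul_zero]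
end
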